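/- arXiv:1209.4665 — 2 statements merged into one kernel-verified Lean document; each statement's English description precedes it below -/
import Mathlib

section
/- Let v : {1,2}×{1,2}×{1,2} → ℝ be totally symmetric, i.e. invariant under all permutations of its three indices. Then A ≤ B, where A = ∑_{k,p,r,l,q,i} v_{kpr} v_{lqr} v_{kli} v_{pqi} and B = ∑_{k,p,r,l,a,i} v_{kpr} v_{lpr} v_{kai} v_{lai}, with all indices ranging over {1,2}. -/
/-!
Put `Q a b c d = ∑ r, v a b r * v c d r`. Total symmetry turns the Calabi tensor
`T j i k l = ∑ r, (v j r i * v r k l + v j r k * v r i l - 2 * v j r l * v r i k)` into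
`Q j i k l + Q j k i l - 2 * Q j l i k`. Expanding `∑ T ^ 2`, each of the three squares sums to
`∑ Q ^ 2`, which equals `B` because `X * Xᵀ` and `Xᵀ * X` have the same Frobenius norm
(`X (a, b) r = v a b r`), and each of the three cross terms sums to `A`. Hence
`0 ≤ ∑ T ^ 2 = 6 * (B - A)`.
-/
open Finset Matrix

theorem Matrix.sum_sq_eq_trace_mul_transpose {m n R : Type*} [Fintype m] [Fintype n]
    [CommSemiring R] (M : Matrix m n R) : ∑ i, ∑ j, M i j ^ 2 = trace (M * Mᵀ) := by
  simp only [sq, ← sum_hadamard_eq, hadamard_apply]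

theorem Matrix.sum_sq_mul_transpose_self {m n R : Type*} [Fintype m] [Fintype n] [CommSemiring R]
    (X : Matrix m n R) :
    ∑ i, ∑ j, (X * Xᵀ) i j ^ 2 = ∑ i, ∑ j, (Xᵀ * X) i j ^ 2 := by
  rw [sum_sq_eq_trace_mul_transpose, sum_sq_eq_trace_mul_transpose, transpose_mul, transpose_mul,
    transpose_transpose, ← Matrix.mul_assoc, trace_mul_comm, Matrix.mul_assoc, Matrix.mul_assoc]

namespace Calabi

variable {ι : Type*} {v : ι → ι → ι → ℝ}

def IsTotallySymmetric (v : ι → ι → ι → ℝ) : Prop :=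
  ∀ k p r, v k p r = v p k r ∧ v k p r = v k r p

namespace IsTotallySymmetric

theorem swap₁₂ (hv : IsTotallySymmetric v) (a b c : ι) : v a b c = v b a c := (hv a b c).1

theorem swap₂₃ (hv : IsTotallySymmetric v) (a b c : ι) : v a b c = v a c b := (hv a b c).2

theorem rotate (hv : IsTotallySymmetric v) (a b c : ι) : v a b c = v b c a := by
  rw [hv.swap₁₂, hv.swap₂₃]

end IsTotallySymmetric

variable [Fintype ι]

def contractLast (v : ι → ι → ι → ℝ) (a b c d : ι) : ℝ := ∑ r, v a b r * v c d r

def calabiTensor (v : ι → ι → ι → ℝ) (j i k l : ι) : ℝ :=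
  ∑ r, (v j r i * v r k l + v j r k * v r i l - 2 * (v j r l * v r i k))

theorem sum_tetrahedral_eq_sum_contractLast_mul (v : ι → ι → ι → ℝ) :
    ∑ k, ∑ p, ∑ r, ∑ l, ∑ q, ∑ i, v k p r * v l q r * v k l i * v p q i =
      ∑ k, ∑ p, ∑ l, ∑ q, contractLast v k p l q * contractLast v k l p q := by
  simp only [contractLast, sum_mul_sum]
  conv_lhs => enter [2, k, 2, p]; rw [sum_comm]; enter [2, l]; rw [sum_comm]
  simp only [mul_assoc]

theorem sum_gram_eq_sum_sq (v : ι → ι → ι → ℝ) :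
    ∑ k, ∑ p, ∑ r, ∑ l, ∑ a, ∑ i, v k p r * v l p r * v k a i * v l a i =
      ∑ k, ∑ l, (∑ p, ∑ r, v k p r * v l p r) ^ 2 := by
  simp only [sq, sum_mul_sum]
  conv_lhs => enter [2, k, 2, p]; rw [sum_comm]
  conv_lhs => enter [2, k]; rw [sum_comm]; enter [2, l, 2, p]; rw [sum_comm]
  simp only [mul_assoc]

theorem sum_sq_contractLast (hv : IsTotallySymmetric v) :
    ∑ a, ∑ b, ∑ c, ∑ d, contractLast v a b c d ^ 2 =
      ∑ k, ∑ l, (∑ p, ∑ r, v k p r * v l p r) ^ 2 := by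
  let X : Matrix (ι × ι) ι ℝ := of fun ab r => v ab.1 ab.2 r
  have hX := X.sum_sq_mul_transpose_self
  simp only [Fintype.sum_prod_type, X, mul_apply, transpose_apply, of_apply] at hX
  unfold contractLast
  rw [hX]
  refine sum_congr rfl fun k _ => sum_congr rfl fun l _ => ?_
  simp only [hv.rotate k, hv.rotate l]

theorem calabiTensor_eq (hv : IsTotallySymmetric v) (j i k l : ι) :
    calabiTensor v j i k l =
      contractLast v j i k l + contractLast v j k i l - 2 * contractLast v j l i k := by
  simp only [calabiTensor, contractLast, mul_sum, ← sum_add_distrib, ← sum_sub_distrib]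
  refine sum_congr rfl fun r _ => ?_
  rw [hv.swap₂₃ j r i, hv.rotate r k l, hv.swap₂₃ j r k, hv.rotate r i l, hv.swap₂₃ j r l,
    hv.rotate r i k]

theorem contractLast_swap_right (hv : IsTotallySymmetric v) (a b c d : ι) :
    contractLast v a b c d = contractLast v a b d c := by
  simp only [contractLast, hv.swap₁₂ c d]

theorem sum_sq_calabiTensor (hv : IsTotallySymmetric v) :
    ∑ j, ∑ i, ∑ k, ∑ l, calabiTensor v j i k l ^ 2 =
      6 * (∑ a, ∑ b, ∑ c, ∑ d, contractLast v a b c d ^ 2 -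
        ∑ k, ∑ p, ∑ l, ∑ q, contractLast v k p l q * contractLast v k l p q) := by
  set Q := contractLast v
  set S := ∑ a, ∑ b, ∑ c, ∑ d, Q a b c d ^ 2
  set A := ∑ k, ∑ p, ∑ l, ∑ q, Q k p l q * Q k l p q
  have hQ : ∀ a b c d, Q a b c d = Q a b d c := contractLast_swap_right hv
  have hS₂ : ∑ j, ∑ i, ∑ k, ∑ l, Q j k i l ^ 2 = S := by
    conv_lhs => enter [2, j]; rw [sum_comm]
  have hS₃ : ∑ j, ∑ i, ∑ k, ∑ l, Q j l i k ^ 2 = S := by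
    conv_lhs => enter [2, j, 2, i]; rw [sum_comm]
    conv_lhs => enter [2, j]; rw [sum_comm]
  have hA₁₃ : ∑ j, ∑ i, ∑ k, ∑ l, Q j i k l * Q j l i k = A := by
    conv_lhs => enter [2, j, 2, i, 2, k, 2, l]; rw [hQ j i k l]
    conv_lhs => enter [2, j, 2, i]; rw [sum_comm]
  have hA₂₃ : ∑ j, ∑ i, ∑ k, ∑ l, Q j k i l * Q j l i k = A := by
    conv_lhs => enter [2, j, 2, i, 2, k, 2, l]; rw [hQ j l i k]
    conv_lhs => enter [2, j]; rw [sum_comm]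
    exact hA₁₃
  calc ∑ j, ∑ i, ∑ k, ∑ l, calabiTensor v j i k l ^ 2
      = ∑ j, ∑ i, ∑ k, ∑ l, (Q j i k l ^ 2 + Q j k i l ^ 2 + 4 * Q j l i k ^ 2
          + 2 * (Q j i k l * Q j k i l) - 4 * (Q j i k l * Q j l i k)
          - 4 * (Q j k i l * Q j l i k)) := by
        simp only [calabiTensor_eq hv]
        congr! 4 with j i k l
        ring
    _ = 6 * (S - A) := by
        simp only [sum_add_distrib, sum_sub_distrib, ← mul_sum, hS₂, hS₃, hA₁₃, hA₂₃]
        ring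

theorem sum_tetrahedral_le_sum_gram (hv : IsTotallySymmetric v) :
    ∑ k, ∑ p, ∑ r, ∑ l, ∑ q, ∑ i, v k p r * v l q r * v k l i * v p q i ≤
      ∑ k, ∑ p, ∑ r, ∑ l, ∑ a, ∑ i, v k p r * v l p r * v k a i * v l a i := by
  have hT := sum_sq_calabiTensor hv
  have hT_nonneg : 0 ≤ ∑ j, ∑ i, ∑ k, ∑ l, calabiTensor v j i k l ^ 2 :=
    sum_nonneg fun _ _ => sum_nonneg fun _ _ => sum_nonneg fun _ _ => sum_nonneg fun _ _ =>
      sq_nonneg _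
  rw [sum_tetrahedral_eq_sum_contractLast_mul, sum_gram_eq_sum_sq, ← sum_sq_contractLast hv]
  linarith

end Calabi

/-- Calabi-type inequality `A ≤ B` for a totally symmetric `2 × 2 × 2` array `v`:
`A = ∑ v_{kpr} v_{lqr} v_{kli} v_{pqi}` and `B = ∑ v_{kpr} v_{lpr} v_{kai} v_{lai}`. -/
theorem stmt3 (v : Fin 2 → Fin 2 → Fin 2 → ℝ)
    (hsymm : ∀ k p r, v k p r = v p k r ∧ v k p r = v k r p) :
    ∑ k, ∑ p, ∑ r, ∑ l, ∑ q, ∑ i, v k p r * v l q r * v k l i * v p q i ≤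
      ∑ k, ∑ p, ∑ r, ∑ l, ∑ a, ∑ i, v k p r * v l p r * v k a i * v l a i :=
  Calabi.sum_tetrahedral_le_sum_gram hsymm
end

section
/- Let L, M, N, h : ℝ² → ℝ be C² functions, define H = (1/2)e^{−2h}(L+N) and K = −1 + (LN − M²)e^{−4h}, and suppose the Codazzi equations ∂₂L − ∂₁M = 2He^{2h}∂₂h and ∂₂M − ∂₁N = −2He^{2h}∂₁h hold everywhere on ℝ². Let q ∈ ℝ² be a point at which h(q) = 0, ∂₁h(q) = ∂₂h(q) = 0, and (∂₁₁h + ∂₂₂h)(q) = −K(q). Then at q: ∂₁₁K + ∂₂₂K ≤ 2(N·∂₁₁H − 2M·∂₁₂H + L·∂₂₂H) + 2((∂₁H)² + (∂₂H)²) − 4K·H² + 4K(K+1). -/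
/-- First partial derivative `∂₁ f` of a function `f : ℝ² → ℝ`. -/
noncomputable def pd1 (f : ℝ × ℝ → ℝ) : ℝ × ℝ → ℝ :=
  fun x => fderiv ℝ f x (1, 0)

/-- Second partial derivative `∂₂ f` of a function `f : ℝ² → ℝ`. -/
noncomputable def pd2 (f : ℝ × ℝ → ℝ) : ℝ × ℝ → ℝ :=
  fun x => fderiv ℝ f x (0, 1)

/-!
At `q` the conformal factor is `1` to first order, so the Codazzi equations differentiated at `q`,
together with `L + N = 2 H e^{2h}` differentiated twice, give `ΔL = 2 ∂₁₁H + 2 H Δh`,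
`ΔN = 2 ∂₂₂H + 2 H Δh` and `ΔM = 2 ∂₁₂H` (Schwarz's theorem makes the mixed terms cancel).
Expanding `ΔK = Δ(LN - M²) - 4 (LN - M²) Δh` with these, `Δh = -K`, `L + N = 2H` and
`LN - M² = K + 1` leaves the gradient terms `2 (∂₁L ∂₁N + ∂₂L ∂₂N) - 2 |∇M|²`; since
`∂ᵢL + ∂ᵢN = 2 ∂ᵢH`, AM-GM bounds them by `2 |∇H|²`.
-/

open Real

section DirectionalDerivative

variable {E : Type*} [NormedAddCommGroup E] [NormedSpace ℝ E]

noncomputable def pdv (v : E) (f : E → ℝ) : E → ℝ :=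
  fun x => fderiv ℝ f x v

variable {f g : E → ℝ} {x v w : E} {c : ℝ}

lemma pdv_add (hf : DifferentiableAt ℝ f x) (hg : DifferentiableAt ℝ g x) :
    pdv v (fun y => f y + g y) x = pdv v f x + pdv v g x := by
  simp [pdv, fderiv_fun_add hf hg]

lemma pdv_sub (hf : DifferentiableAt ℝ f x) (hg : DifferentiableAt ℝ g x) :
    pdv v (fun y => f y - g y) x = pdv v f x - pdv v g x := by
  simp [pdv, fderiv_fun_sub hf hg]

lemma pdv_neg : pdv v (fun y => -f y) x = -pdv v f x := by
  simp [pdv, fderiv_fun_neg]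

lemma pdv_add_const : pdv v (fun y => f y + c) = pdv v f := by
  ext x; simp [pdv, fderiv_add_const]

lemma pdv_const_mul (hf : DifferentiableAt ℝ f x) :
    pdv v (fun y => c * f y) x = c * pdv v f x := by
  simp [pdv, fderiv_const_mul hf]

lemma pdv_mul (hf : DifferentiableAt ℝ f x) (hg : DifferentiableAt ℝ g x) :
    pdv v (fun y => f y * g y) x = pdv v f x * g x + f x * pdv v g x := by
  simp [pdv, fderiv_fun_mul hf hg]; ring

lemma pdv_exp (hf : DifferentiableAt ℝ f x) :
    pdv v (fun y => exp (f y)) x = exp (f x) * pdv v f x := by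
  simp [pdv, fderiv_exp hf]

lemma contDiff_pdv (hf : ContDiff ℝ 2 f) : ContDiff ℝ 1 (pdv v f) :=
  (ContinuousLinearMap.apply ℝ ℝ v).contDiff.comp (hf.fderiv_right (by norm_num))

lemma differentiable_pdv (hf : ContDiff ℝ 2 f) : Differentiable ℝ (pdv v f) :=
  (contDiff_pdv hf).differentiable one_ne_zero

lemma pdv_pdv_eq_fderiv_fderiv (hf : ContDiff ℝ 2 f) :
    pdv w (pdv v f) x = fderiv ℝ (fderiv ℝ f) x w v := by
  have hf' : DifferentiableAt ℝ (fderiv ℝ f) x :=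
    (hf.fderiv_right (m := 1) (by norm_num)).differentiable one_ne_zero x
  change fderiv ℝ (fun y => fderiv ℝ f y v) x w = _
  simp [fderiv_clm_apply hf' (differentiableAt_const v)]

lemma pdv_comm (hf : ContDiff ℝ 2 f) : pdv w (pdv v f) x = pdv v (pdv w f) x := by
  rw [pdv_pdv_eq_fderiv_fderiv hf, pdv_pdv_eq_fderiv_fderiv hf,
    hf.contDiffAt.isSymmSndFDerivAt (by simp)]

lemma pdv_pdv_sub (hf : ContDiff ℝ 2 f) (hg : ContDiff ℝ 2 g) :
    pdv w (pdv v (fun y => f y - g y)) x = pdv w (pdv v f) x - pdv w (pdv v g) x := by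
  have : pdv v (fun y => f y - g y) = fun y => pdv v f y - pdv v g y :=
    funext fun y => pdv_sub (hf.differentiable two_ne_zero y) (hg.differentiable two_ne_zero y)
  rw [this, pdv_sub (differentiable_pdv hf x) (differentiable_pdv hg x)]

lemma pdv_pdv_mul (hf : ContDiff ℝ 2 f) (hg : ContDiff ℝ 2 g) :
    pdv w (pdv v (fun y => f y * g y)) x = pdv w (pdv v f) x * g x + pdv v f x * pdv w g x
      + pdv w f x * pdv v g x + f x * pdv w (pdv v g) x := by
  have df := hf.differentiable two_ne_zero
  have dg := hg.differentiable two_ne_zero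
  have : pdv v (fun y => f y * g y) = fun y => pdv v f y * g y + f y * pdv v g y :=
    funext fun y => pdv_mul (df y) (dg y)
  rw [this, pdv_add ((differentiable_pdv hf x).fun_mul (dg x))
      ((df x).fun_mul (differentiable_pdv hg x)),
    pdv_mul (differentiable_pdv hf x) (dg x), pdv_mul (df x) (differentiable_pdv hg x)]
  ring

lemma pdv_pdv_add (hf : ContDiff ℝ 2 f) (hg : ContDiff ℝ 2 g) :
    pdv w (pdv v (fun y => f y + g y)) x = pdv w (pdv v f) x + pdv w (pdv v g) x := by
  have : pdv v (fun y => f y + g y) = fun y => pdv v f y + pdv v g y :=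
    funext fun y => pdv_add (hf.differentiable two_ne_zero y) (hg.differentiable two_ne_zero y)
  rw [this, pdv_add (differentiable_pdv hf x) (differentiable_pdv hg x)]

lemma pdv_pdv_const_mul (hf : ContDiff ℝ 2 f) :
    pdv w (pdv v (fun y => c * f y)) x = c * pdv w (pdv v f) x := by
  have : pdv v (fun y => c * f y) = fun y => c * pdv v f y :=
    funext fun y => pdv_const_mul (hf.differentiable two_ne_zero y)
  rw [this, pdv_const_mul (differentiable_pdv hf x)]

/- At a point where `h` vanishes to first order, the weight `exp (c * h)` is invisible to first
derivatives and contributes only `c * f * ∂²h` to second ones. -/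
section CriticalZero

variable {a h : E → ℝ} {q u : E}

lemma pdv_mul_exp_of_crit (hf : DifferentiableAt ℝ f q) (hh : DifferentiableAt ℝ h q)
    (hq0 : h q = 0) (hq : fderiv ℝ h q = 0) :
    pdv v (fun x => f x * exp (c * h x)) q = pdv v f q := by
  rw [pdv_mul hf (hh.const_mul c).exp, pdv_exp (hh.const_mul c), pdv_const_mul hh]
  simp [pdv, hq, hq0]

lemma pdv_mul_exp_mul_pdv_of_crit (ha : DifferentiableAt ℝ a q) (hh : ContDiff ℝ 2 h)
    (hq0 : h q = 0) (hq : fderiv ℝ h q = 0) :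
    pdv w (fun x => a x * exp (c * h x) * pdv u h x) q = a q * pdv w (pdv u h) q := by
  have hu := differentiable_pdv (v := u) hh q
  have : (fun x => a x * exp (c * h x) * pdv u h x) = fun x => a x * pdv u h x * exp (c * h x) :=
    funext fun x => by ring
  rw [this, pdv_mul_exp_of_crit (ha.fun_mul hu) (hh.differentiable two_ne_zero q) hq0 hq,
    pdv_mul ha hu]
  simp [pdv, hq]

lemma pdv_pdv_mul_exp_of_crit (hf : ContDiff ℝ 2 f) (hh : ContDiff ℝ 2 h)
    (hq0 : h q = 0) (hq : fderiv ℝ h q = 0) :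
    pdv w (pdv v (fun x => f x * exp (c * h x))) q
      = pdv w (pdv v f) q + c * f q * pdv w (pdv v h) q := by
  have df := hf.differentiable two_ne_zero
  have dh := hh.differentiable two_ne_zero
  have : pdv v (fun x => f x * exp (c * h x))
      = fun x => pdv v f x * exp (c * h x) + c * f x * exp (c * h x) * pdv v h x :=
    funext fun x => by
      rw [pdv_mul (df x) ((dh x).const_mul c).exp, pdv_exp ((dh x).const_mul c),
        pdv_const_mul (dh x)]
      ring
  rw [this, pdv_add ((differentiable_pdv hf q).fun_mul ((dh q).const_mul c).exp)
      ((((df q).const_mul c).fun_mul ((dh q).const_mul c).exp).fun_mul (differentiable_pdv hh q)),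
    pdv_mul_exp_of_crit (differentiable_pdv hf q) (dh q) hq0 hq,
    pdv_mul_exp_mul_pdv_of_crit ((df q).const_mul c) hh hq0 hq]

end CriticalZero

end DirectionalDerivative

lemma pd1_eq_pdv : pd1 = pdv (1, 0) := rfl

lemma pd2_eq_pdv : pd2 = pdv (0, 1) := rfl

lemma fderiv_eq_zero_of_pd1_of_pd2 {f : ℝ × ℝ → ℝ} {x : ℝ × ℝ} (h1 : pd1 f x = 0)
    (h2 : pd2 f x = 0) : fderiv ℝ f x = 0 := by
  ext <;> simpa [pd1, pd2]

lemma mul_le_sq_of_add_eq_two_mul {a b c : ℝ} (h : a + b = 2 * c) : a * b ≤ c ^ 2 := by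
  obtain rfl : c = (a + b) / 2 := by linarith
  linarith [sq_nonneg (a - b)]

/-- `add_eq` is the definition of the mean curvature `H` solved for `L + N`. -/
structure CodazziSystem (L M N h H : ℝ × ℝ → ℝ) : Prop where
  contDiff_L : ContDiff ℝ 2 L
  contDiff_M : ContDiff ℝ 2 M
  contDiff_N : ContDiff ℝ 2 N
  contDiff_h : ContDiff ℝ 2 h
  contDiff_H : ContDiff ℝ 2 H
  add_eq : ∀ x, L x + N x = 2 * H x * exp (2 * h x)
  codazzi₁ : ∀ x, pd2 L x - pd1 M x = 2 * H x * exp (2 * h x) * pd2 h x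
  codazzi₂ : ∀ x, pd2 M x - pd1 N x = -(2 * H x * exp (2 * h x) * pd1 h x)

namespace CodazziSystem

variable {L M N h H : ℝ × ℝ → ℝ} {q v w : ℝ × ℝ}

lemma pdv_add_eq (S : CodazziSystem L M N h H) (hq0 : h q = 0) (hq : fderiv ℝ h q = 0) :
    pdv v L q + pdv v N q = 2 * pdv v H q := by
  rw [← pdv_add (S.contDiff_L.differentiable two_ne_zero q)
    (S.contDiff_N.differentiable two_ne_zero q), funext S.add_eq,
    pdv_mul_exp_of_crit ((S.contDiff_H.differentiable two_ne_zero q).const_mul 2)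
      (S.contDiff_h.differentiable two_ne_zero q) hq0 hq,
    pdv_const_mul (S.contDiff_H.differentiable two_ne_zero q)]

lemma pdv_pdv_add_eq (S : CodazziSystem L M N h H) (hq0 : h q = 0) (hq : fderiv ℝ h q = 0) :
    pdv w (pdv v L) q + pdv w (pdv v N) q
      = 2 * pdv w (pdv v H) q + 4 * H q * pdv w (pdv v h) q := by
  rw [← pdv_pdv_add S.contDiff_L S.contDiff_N, funext S.add_eq,
    pdv_pdv_mul_exp_of_crit (contDiff_const.mul S.contDiff_H) S.contDiff_h hq0 hq,
    pdv_pdv_const_mul S.contDiff_H]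
  ring

lemma pdv_codazzi₁ (S : CodazziSystem L M N h H) (hq0 : h q = 0) (hq : fderiv ℝ h q = 0) :
    pdv w (pd2 L) q - pdv w (pd1 M) q = 2 * H q * pdv w (pd2 h) q := by
  rw [← pdv_sub (f := pd2 L) (g := pd1 M) (differentiable_pdv S.contDiff_L q)
      (differentiable_pdv S.contDiff_M q),
    funext S.codazzi₁]
  exact pdv_mul_exp_mul_pdv_of_crit ((S.contDiff_H.differentiable two_ne_zero q).const_mul 2)
    S.contDiff_h hq0 hq

lemma pdv_codazzi₂ (S : CodazziSystem L M N h H) (hq0 : h q = 0) (hq : fderiv ℝ h q = 0) :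
    pdv w (pd2 M) q - pdv w (pd1 N) q = -(2 * H q * pdv w (pd1 h) q) := by
  rw [← pdv_sub (f := pd2 M) (g := pd1 N) (differentiable_pdv S.contDiff_M q)
      (differentiable_pdv S.contDiff_N q),
    funext S.codazzi₂, pdv_neg]
  exact congrArg _ (pdv_mul_exp_mul_pdv_of_crit
    ((S.contDiff_H.differentiable two_ne_zero q).const_mul 2) S.contDiff_h hq0 hq)

lemma laplacian_L (S : CodazziSystem L M N h H) (hq0 : h q = 0) (hq : fderiv ℝ h q = 0) :
    pd1 (pd1 L) q + pd2 (pd2 L) q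
      = 2 * pd1 (pd1 H) q + 2 * H q * (pd1 (pd1 h) q + pd2 (pd2 h) q) := by
  have trace : pd1 (pd1 L) q + pd1 (pd1 N) q = 2 * pd1 (pd1 H) q + 4 * H q * pd1 (pd1 h) q :=
    S.pdv_pdv_add_eq hq0 hq
  have c₁ : pd2 (pd2 L) q - pd2 (pd1 M) q = 2 * H q * pd2 (pd2 h) q := S.pdv_codazzi₁ hq0 hq
  have c₂ : pd1 (pd2 M) q - pd1 (pd1 N) q = -(2 * H q * pd1 (pd1 h) q) := S.pdv_codazzi₂ hq0 hq
  have sym : pd2 (pd1 M) q = pd1 (pd2 M) q := pdv_comm S.contDiff_M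
  linear_combination trace + c₁ + c₂ + sym

lemma laplacian_N (S : CodazziSystem L M N h H) (hq0 : h q = 0) (hq : fderiv ℝ h q = 0) :
    pd1 (pd1 N) q + pd2 (pd2 N) q
      = 2 * pd2 (pd2 H) q + 2 * H q * (pd1 (pd1 h) q + pd2 (pd2 h) q) := by
  have trace : pd2 (pd2 L) q + pd2 (pd2 N) q = 2 * pd2 (pd2 H) q + 4 * H q * pd2 (pd2 h) q :=
    S.pdv_pdv_add_eq hq0 hq
  have c₁ : pd2 (pd2 L) q - pd2 (pd1 M) q = 2 * H q * pd2 (pd2 h) q := S.pdv_codazzi₁ hq0 hq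
  have c₂ : pd1 (pd2 M) q - pd1 (pd1 N) q = -(2 * H q * pd1 (pd1 h) q) := S.pdv_codazzi₂ hq0 hq
  have sym : pd2 (pd1 M) q = pd1 (pd2 M) q := pdv_comm S.contDiff_M
  linear_combination trace - c₁ - c₂ - sym

lemma laplacian_M (S : CodazziSystem L M N h H) (hq0 : h q = 0) (hq : fderiv ℝ h q = 0) :
    pd1 (pd1 M) q + pd2 (pd2 M) q = 2 * pd1 (pd2 H) q := by
  have trace : pd1 (pd2 L) q + pd1 (pd2 N) q = 2 * pd1 (pd2 H) q + 4 * H q * pd1 (pd2 h) q :=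
    S.pdv_pdv_add_eq hq0 hq
  have c₁ : pd1 (pd2 L) q - pd1 (pd1 M) q = 2 * H q * pd1 (pd2 h) q := S.pdv_codazzi₁ hq0 hq
  have c₂ : pd2 (pd2 M) q - pd2 (pd1 N) q = -(2 * H q * pd2 (pd1 h) q) := S.pdv_codazzi₂ hq0 hq
  have symN : pd2 (pd1 N) q = pd1 (pd2 N) q := pdv_comm S.contDiff_N
  have symh : pd2 (pd1 h) q = pd1 (pd2 h) q := pdv_comm S.contDiff_h
  linear_combination trace - c₁ + c₂ + symN - 2 * H q * symh

end CodazziSystem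

section GaussCurvature

variable {L M N h K : ℝ × ℝ → ℝ} {q v : ℝ × ℝ}

lemma pdv_pdv_gaussCurvature (hL : ContDiff ℝ 2 L) (hM : ContDiff ℝ 2 M) (hN : ContDiff ℝ 2 N)
    (hh : ContDiff ℝ 2 h) (hK : ∀ x, K x = -1 + (L x * N x - M x ^ 2) * exp (-4 * h x))
    (hq0 : h q = 0) (hq : fderiv ℝ h q = 0) :
    pdv v (pdv v K) q = pdv v (pdv v L) q * N q + 2 * (pdv v L q * pdv v N q)
      + L q * pdv v (pdv v N) q - 2 * pdv v M q ^ 2 - 2 * M q * pdv v (pdv v M) q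
      - 4 * (L q * N q - M q ^ 2) * pdv v (pdv v h) q := by
  have : K = fun x => (L x * N x - M x * M x) * exp (-4 * h x) + -1 :=
    funext fun x => by rw [hK]; ring
  rw [this, pdv_add_const, pdv_pdv_mul_exp_of_crit ((hL.mul hN).sub (hM.mul hM)) hh hq0 hq,
    pdv_pdv_sub (hL.mul hN) (hM.mul hM), pdv_pdv_mul hL hN, pdv_pdv_mul hM hM]
  ring

lemma laplacian_gaussCurvature (hL : ContDiff ℝ 2 L) (hM : ContDiff ℝ 2 M)
    (hN : ContDiff ℝ 2 N) (hh : ContDiff ℝ 2 h)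
    (hK : ∀ x, K x = -1 + (L x * N x - M x ^ 2) * exp (-4 * h x))
    (hq0 : h q = 0) (hq : fderiv ℝ h q = 0) :
    pd1 (pd1 K) q + pd2 (pd2 K) q
      = N q * (pd1 (pd1 L) q + pd2 (pd2 L) q) + L q * (pd1 (pd1 N) q + pd2 (pd2 N) q)
        - 2 * M q * (pd1 (pd1 M) q + pd2 (pd2 M) q)
        + 2 * (pd1 L q * pd1 N q + pd2 L q * pd2 N q) - 2 * (pd1 M q ^ 2 + pd2 M q ^ 2)
        - 4 * (L q * N q - M q ^ 2) * (pd1 (pd1 h) q + pd2 (pd2 h) q) := by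
  rw [pd1_eq_pdv, pd2_eq_pdv]
  linear_combination pdv_pdv_gaussCurvature (v := (1, 0)) hL hM hN hh hK hq0 hq
    + pdv_pdv_gaussCurvature (v := (0, 1)) hL hM hN hh hK hq0 hq

end GaussCurvature

/-- The key pointwise inequality (2.43) in the proof of the mean curvature estimate:
in conformal coordinates with `H = (1/2) e^{−2h}(L+N)`, `K = −1 + (LN − M²)e^{−4h}`,
the Codazzi equations holding everywhere, and `q` a point where `h`, `∂₁h`, `∂₂h`
vanish and the Gauss equation `Δh = −K` holds, one has at `q`:
`ΔK ≤ 2(N ∂₁₁H − 2M ∂₁₂H + L ∂₂₂H) + 2((∂₁H)² + (∂₂H)²) − 4KH² + 4K(K+1)`. -/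
theorem stmt13 (L M N h H K : ℝ × ℝ → ℝ)
    (hL : ContDiff ℝ 2 L) (hM : ContDiff ℝ 2 M) (hN : ContDiff ℝ 2 N)
    (hh : ContDiff ℝ 2 h)
    (hH : ∀ x, H x = (1 / 2) * Real.exp (-2 * h x) * (L x + N x))
    (hK : ∀ x, K x = -1 + (L x * N x - (M x) ^ 2) * Real.exp (-4 * h x))
    (codazzi1 : ∀ x, pd2 L x - pd1 M x = 2 * H x * Real.exp (2 * h x) * pd2 h x)
    (codazzi2 : ∀ x, pd2 M x - pd1 N x = -(2 * H x * Real.exp (2 * h x) * pd1 h x))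
    (q : ℝ × ℝ) (hq0 : h q = 0) (hq1 : pd1 h q = 0) (hq2 : pd2 h q = 0)
    (gauss : pd1 (pd1 h) q + pd2 (pd2 h) q = -K q) :
    pd1 (pd1 K) q + pd2 (pd2 K) q ≤
      2 * (N q * pd1 (pd1 H) q - 2 * M q * pd1 (pd2 H) q + L q * pd2 (pd2 H) q) +
        2 * ((pd1 H q) ^ 2 + (pd2 H q) ^ 2) - 4 * K q * (H q) ^ 2 +
        4 * K q * (K q + 1) := by
  have hq : fderiv ℝ h q = 0 := fderiv_eq_zero_of_pd1_of_pd2 hq1 hq2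
  have hLN : ∀ x, L x + N x = 2 * H x * exp (2 * h x) := fun x => by
    have : exp (-2 * h x) * exp (2 * h x) = 1 := by rw [← exp_add]; simp
    rw [hH x]
    linear_combination -(L x + N x) * this
  have S : CodazziSystem L M N h H :=
    ⟨hL, hM, hN, hh, by rw [funext hH]; fun_prop, hLN, codazzi1, codazzi2⟩
  have hLNq : L q + N q = 2 * H q := by simpa [hq0] using hLN q
  have hPq : L q * N q - M q ^ 2 = K q + 1 := by simp [hK q, hq0]
  have b₁ : pd1 L q * pd1 N q ≤ pd1 H q ^ 2 := mul_le_sq_of_add_eq_two_mul (S.pdv_add_eq hq0 hq)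
  have b₂ : pd2 L q * pd2 N q ≤ pd2 H q ^ 2 := mul_le_sq_of_add_eq_two_mul (S.pdv_add_eq hq0 hq)
  have hΔK := laplacian_gaussCurvature hL hM hN hh hK hq0 hq
  rw [S.laplacian_L hq0 hq, S.laplacian_N hq0 hq, S.laplacian_M hq0 hq, hPq, gauss] at hΔK
  linear_combination hΔK + 2 * b₁ + 2 * b₂ + 2 * sq_nonneg (pd1 M q) + 2 * sq_nonneg (pd2 M q)
    - 2 * H q * K q * hLNq
end
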